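/- arXiv:1008.2467 — 3 statements merged into one kernel-verified Lean document; each statement's English description precedes it below -/
import Mathlib

section
/- If a series ∑ a_j of complex numbers is Cesàro summable with Cesàro sum S, then it is Abel summable with Abel sum S: lim_{r→1−} ∑_{j=0}^∞ a_j r^j = S. -/
/-!
With `c n = ∑_{l ≤ n} ∑_{j ≤ l} a j`, two Cauchy products with the geometric series give
`∑ a j x ^ j = (1 - x) ^ 2 ∑ c n x ^ n`, so the Abel mean at `r` is the average of the Cesàro
means `c n / (n + 1)` against the weights `(1 - r) ^ 2 (n + 1) r ^ n`. These are nonnegative,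
sum to `1`, and each tends to `0` as `r → 1⁻`; any such averaging method preserves limits
(Silverman–Toeplitz). The linear growth of `a` needed for convergence follows from that of `c`
by differencing twice.
-/

open Finset Filter Topology

theorem Filter.Tendsto.exists_norm_le {E : Type*} [SeminormedAddCommGroup E] {s : ℕ → E} {S : E}
    (hs : Tendsto s atTop (𝓝 S)) : ∃ M, ∀ n, ‖s n‖ ≤ M := by
  obtain ⟨M, hM⟩ := hs.norm.bddAbove_range
  exact ⟨M, fun n => hM ⟨n, rfl⟩⟩

section Toeplitz

variable {ι E : Type*} [NormedAddCommGroup E] [NormedSpace ℝ E] {l : Filter ι} {w : ι → ℕ → ℝ}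

theorem tendsto_tsum_smul_of_tendsto_zero (hw0 : ∀ᶠ i in l, ∀ n, 0 ≤ w i n)
    (hw1 : ∀ᶠ i in l, HasSum (w i) 1) (hwn : ∀ n, Tendsto (w · n) l (𝓝 0)) {s : ℕ → E}
    (hs : Tendsto s atTop (𝓝 0)) : Tendsto (fun i => ∑' n, w i n • s n) l (𝓝 0) := by
  obtain ⟨M, hM⟩ := hs.exists_norm_le
  rw [NormedAddGroup.tendsto_nhds_zero]
  intro ε hε
  obtain ⟨N, hN⟩ := eventually_atTop.1 (NormedAddGroup.tendsto_nhds_zero.1 hs _ (half_pos hε))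
  have hhead : Tendsto (fun i => ∑ n ∈ range N, w i n * M) l (𝓝 0) := by
    simpa using tendsto_finsetSum _ fun n _ => (hwn n).mul_const M
  filter_upwards [hw0, hw1, hhead.eventually (gt_mem_nhds (half_pos hε))] with i hi0 hi1 hiN
  have hsum : Summable fun n => w i n * ‖s n‖ :=
    (hi1.summable.mul_right M).of_nonneg_of_le (fun n => mul_nonneg (hi0 n) (norm_nonneg _))
      fun n => mul_le_mul_of_nonneg_left (hM n) (hi0 n)
  have htail : ∑' n, w i (n + N) ≤ 1 := by
    have := hi1.summable.sum_add_tsum_nat_add N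
    rw [hi1.tsum_eq] at this
    linarith [sum_nonneg fun n (_ : n ∈ range N) => hi0 n]
  calc ‖∑' n, w i n • s n‖ ≤ ∑' n, w i n * ‖s n‖ :=
        tsum_of_norm_bounded hsum.hasSum fun n => by
          rw [norm_smul, Real.norm_of_nonneg (hi0 n)]
    _ = ∑ n ∈ range N, w i n * ‖s n‖ + ∑' n, w i (n + N) * ‖s (n + N)‖ :=
        (hsum.sum_add_tsum_nat_add N).symm
    _ ≤ ∑ n ∈ range N, w i n * M + ∑' n, w i (n + N) * (ε / 2) := by
        refine add_le_add (sum_le_sum fun n _ => mul_le_mul_of_nonneg_left (hM n) (hi0 n)) ?_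
        refine ((summable_nat_add_iff N).2 hsum).tsum_le_tsum (fun n => ?_)
          (((summable_nat_add_iff N).2 hi1.summable).mul_right _)
        exact mul_le_mul_of_nonneg_left (hN _ (Nat.le_add_left N n)).le (hi0 _)
    _ < ε / 2 + ε / 2 := by
        rw [tsum_mul_right]
        exact add_lt_add_of_lt_of_le hiN (mul_le_of_le_one_left (half_pos hε).le htail)
    _ = ε := add_halves ε

theorem tendsto_tsum_smul_of_tendsto [CompleteSpace E] (hw0 : ∀ᶠ i in l, ∀ n, 0 ≤ w i n)
    (hw1 : ∀ᶠ i in l, HasSum (w i) 1) (hwn : ∀ n, Tendsto (w · n) l (𝓝 0)) {s : ℕ → E} {S : E}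
    (hs : Tendsto s atTop (𝓝 S)) : Tendsto (fun i => ∑' n, w i n • s n) l (𝓝 S) := by
  have h :=
    (tendsto_tsum_smul_of_tendsto_zero hw0 hw1 hwn (tendsto_sub_nhds_zero_iff.2 hs)).add_const S
  rw [zero_add] at h
  refine h.congr' ?_
  obtain ⟨M, hM⟩ := hs.exists_norm_le
  filter_upwards [hw0, hw1] with i hi0 hi1
  have hsum : Summable fun n => w i n • s n :=
    (hi1.summable.mul_right M).of_norm_bounded fun n => by
      rw [norm_smul, Real.norm_of_nonneg (hi0 n)]
      exact mul_le_mul_of_nonneg_left (hM n) (hi0 n)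
  simp_rw [smul_sub]
  rw [hsum.tsum_sub (hi1.summable.smul_const S), hi1.summable.tsum_smul_const, hi1.tsum_eq,
    one_smul, sub_add_cancel]

end Toeplitz

theorem tendsto_one_sub_sq_smul_tsum_pow_smul {E : Type*} [NormedAddCommGroup E] [NormedSpace ℝ E]
    [CompleteSpace E] {c : ℕ → E} {S : E}
    (hc : Tendsto (fun n : ℕ => ((n : ℝ) + 1)⁻¹ • c n) atTop (𝓝 S)) :
    Tendsto (fun r : ℝ => (1 - r) ^ 2 • ∑' n, r ^ n • c n) (𝓝[<] 1) (𝓝 S) := by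
  have hpos : ∀ᶠ r : ℝ in 𝓝[<] 1, r ∈ Set.Ioo 0 1 := Ioo_mem_nhdsLT one_pos
  have hw0 : ∀ᶠ r : ℝ in 𝓝[<] 1, ∀ n : ℕ, 0 ≤ (1 - r) ^ 2 * ((n + 1) * r ^ n) := by
    filter_upwards [hpos] with r hr n
    have := hr.1.le
    positivity
  have hw1 : ∀ᶠ r : ℝ in 𝓝[<] 1, HasSum (fun n : ℕ => (1 - r) ^ 2 * ((n + 1) * r ^ n)) 1 := by
    filter_upwards [hpos] with r hr
    have hr1 : ‖r‖ < 1 := by rw [Real.norm_of_nonneg hr.1.le]; exact hr.2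
    have hne : (1 - r) ^ 2 ≠ 0 := pow_ne_zero _ (sub_ne_zero.2 hr.2.ne')
    have h := (hasSum_choose_mul_geometric_of_norm_lt_one 1 hr1).mul_left ((1 - r) ^ 2)
    rw [one_add_one_eq_two, mul_one_div_cancel hne] at h
    simpa [mul_assoc] using h
  have hwn (n : ℕ) : Tendsto (fun r : ℝ => (1 - r) ^ 2 * ((n + 1) * r ^ n)) (𝓝[<] 1) (𝓝 0) := by
    have : Continuous fun r : ℝ => (1 - r) ^ 2 * ((n + 1) * r ^ n) := by fun_prop
    simpa using (this.tendsto 1).mono_left nhdsWithin_le_nhds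
  refine (tendsto_tsum_smul_of_tendsto hw0 hw1 hwn hc).congr fun r => ?_
  rw [← tsum_const_smul'']
  refine tsum_congr fun n => ?_
  rw [smul_smul, smul_smul]
  congr 1
  field_simp

theorem Filter.Tendsto.exists_norm_le_mul_add_one {E : Type*} [SeminormedAddCommGroup E]
    [NormedSpace ℝ E] {c : ℕ → E} {S : E}
    (hc : Tendsto (fun n : ℕ => ((n : ℝ) + 1)⁻¹ • c n) atTop (𝓝 S)) :
    ∃ C, ∀ n : ℕ, ‖c n‖ ≤ C * (n + 1) := by
  obtain ⟨C, hC⟩ := hc.exists_norm_le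
  refine ⟨C, fun n => ?_⟩
  have hn : (0 : ℝ) < n + 1 := by positivity
  have := hC n
  rwa [norm_smul, norm_inv, Real.norm_of_nonneg hn.le, inv_mul_le_iff₀ hn, mul_comm] at this

theorem norm_le_two_mul_of_norm_sum_range_le {E : Type*} [SeminormedAddCommGroup E] {f : ℕ → E}
    {C : ℝ} (h : ∀ n : ℕ, ‖∑ j ∈ range (n + 1), f j‖ ≤ C * (n + 1)) (n : ℕ) :
    ‖f n‖ ≤ 2 * C * (n + 1) := by
  have hC : ‖f 0‖ ≤ C := by simpa using h 0
  cases n with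
  | zero => simp only [CharP.cast_eq_zero, zero_add, mul_one]; linarith [norm_nonneg (f 0)]
  | succ n =>
    rw [← sum_range_succ_sub_sum f]
    have := norm_sub_le (∑ j ∈ range (n + 1 + 1), f j) (∑ j ∈ range (n + 1), f j)
    have h1 := h (n + 1)
    have h0 := h n
    push_cast at h1 ⊢
    nlinarith [norm_nonneg (f 0)]

section PowerSeries

variable {𝕜 : Type*} [NormedField 𝕜] {f : ℕ → 𝕜} {x : 𝕜}

theorem summable_norm_mul_pow_of_norm_le {C : ℝ} (h : ∀ n : ℕ, ‖f n‖ ≤ C * (n + 1))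
    (hx : ‖x‖ < 1) : Summable fun n => ‖f n * x ^ n‖ := by
  have hgeom : Summable fun n : ℕ => ((n : ℝ) + 1) * ‖x‖ ^ n := by
    simpa using summable_choose_mul_geometric_of_norm_lt_one 1 (by rwa [norm_norm] : ‖‖x‖‖ < 1)
  refine (hgeom.mul_left C).of_nonneg_of_le (fun _ => norm_nonneg _) fun n => ?_
  rw [norm_mul, norm_pow, ← mul_assoc]
  exact mul_le_mul_of_nonneg_right (h n) (by positivity)

theorem sum_range_mul_pow_mul_pow_sub {R : Type*} [Semiring R] (f : ℕ → R) (x : R) (n : ℕ) :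
    ∑ k ∈ range (n + 1), f k * x ^ k * x ^ (n - k) = (∑ k ∈ range (n + 1), f k) * x ^ n := by
  rw [sum_mul]
  refine sum_congr rfl fun k hk => ?_
  rw [mul_assoc, ← pow_add, Nat.add_sub_cancel' (Nat.lt_succ_iff.1 (mem_range.1 hk))]

theorem summable_norm_sum_range_mul_pow (hx : ‖x‖ < 1) (hf : Summable fun n => ‖f n * x ^ n‖) :
    Summable fun n => ‖(∑ j ∈ range (n + 1), f j) * x ^ n‖ := by
  simpa only [sum_range_mul_pow_mul_pow_sub] using
    summable_norm_sum_mul_range_of_summable_norm hf (summable_norm_geometric_of_norm_lt_one hx)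

theorem tsum_sum_range_mul_pow [CompleteSpace 𝕜] (hx : ‖x‖ < 1)
    (hf : Summable fun n => ‖f n * x ^ n‖) :
    ∑' n, (∑ j ∈ range (n + 1), f j) * x ^ n = (∑' n, f n * x ^ n) * (1 - x)⁻¹ := by
  rw [← tsum_geometric_of_norm_lt_one hx, tsum_mul_tsum_eq_tsum_sum_range_of_summable_norm hf
    (summable_norm_geometric_of_norm_lt_one hx)]
  simp_rw [sum_range_mul_pow_mul_pow_sub]

end PowerSeries

theorem abel_summable_of_cesaro_summable (a : ℕ → ℂ) (S : ℂ)
    (h : Filter.Tendsto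
      (fun n => (∑ l ∈ Finset.range (n + 1), ∑ j ∈ Finset.range (l + 1), a j) / ((n : ℂ) + 1))
      Filter.atTop (nhds S)) :
    (∀ r : ℝ, 0 ≤ r → r < 1 → Summable (fun j : ℕ => a j * (r : ℂ) ^ j)) ∧
    Filter.Tendsto (fun r : ℝ => ∑' j : ℕ, a j * (r : ℂ) ^ j)
      (nhdsWithin 1 (Set.Ico (0 : ℝ) 1)) (nhds S) := by
  have hc : Tendsto (fun n : ℕ => ((n : ℝ) + 1)⁻¹ •
      ∑ l ∈ range (n + 1), ∑ j ∈ range (l + 1), a j) atTop (𝓝 S) := by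
    refine h.congr fun n => ?_
    rw [Complex.real_smul, div_eq_inv_mul]
    push_cast
    rfl
  obtain ⟨C, hC⟩ := hc.exists_norm_le_mul_add_one
  have hsum {x : ℂ} (hx : ‖x‖ < 1) : Summable fun n => ‖a n * x ^ n‖ :=
    summable_norm_mul_pow_of_norm_le
      (norm_le_two_mul_of_norm_sum_range_le (norm_le_two_mul_of_norm_sum_range_le hC)) hx
  have hnorm {r : ℝ} (hr : r ∈ Set.Ico 0 1) : ‖(r : ℂ)‖ < 1 := by
    rw [Complex.norm_real, Real.norm_of_nonneg hr.1]
    exact hr.2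
  refine ⟨fun r h0 h1 => (hsum (hnorm ⟨h0, h1⟩)).of_norm, ?_⟩
  refine ((tendsto_one_sub_sq_smul_tsum_pow_smul hc).mono_left
    (nhdsWithin_mono _ Set.Ico_subset_Iio_self)).congr' ?_
  filter_upwards [self_mem_nhdsWithin] with r hr
  have hx := hnorm hr
  have hne : (1 : ℂ) - r ≠ 0 := sub_ne_zero.2 (by exact_mod_cast hr.2.ne')
  simp_rw [Complex.real_smul, mul_comm ((r ^ _ : ℝ) : ℂ)]
  push_cast
  rw [tsum_sum_range_mul_pow hx (summable_norm_sum_range_mul_pow hx (hsum hx)),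
    tsum_sum_range_mul_pow hx (hsum hx)]
  field_simp
end

section
/- In a normed algebra with unit e, if ‖x‖ = 1 and e − x is invertible, then (1/(n+1)) ∑_{l=0}^n ∑_{j=0}^l x^j converges to (e − x)^{-1} as n → ∞. -/
theorem double_averages_tendsto_inverse {A : Type*} [NormedRing A]
    [NormedAlgebra ℝ A] [NormOneClass A] (x y : A) (hx : ‖x‖ = 1)
    (h1 : (1 - x) * y = 1) (h2 : y * (1 - x) = 1) :
    Filter.Tendsto
      (fun n : ℕ => ((n : ℝ) + 1)⁻¹ •
        ∑ l ∈ Finset.range (n + 1), ∑ j ∈ Finset.range (l + 1), x ^ j)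
      Filter.atTop (nhds y) := by
  have geom : ∀ m : ℕ, (1 - x) * ∑ j ∈ Finset.range m, x ^ j = 1 - x ^ m := by
    intro m
    have h : (1 - x) * ∑ j ∈ Finset.range m, x ^ j
        = -((x - 1) * ∑ j ∈ Finset.range m, x ^ j) := by
      rw [neg_mul_eq_neg_mul, neg_sub]
    rw [h, mul_geom_sum, neg_sub]
  have key : ∀ n : ℕ, ∑ l ∈ Finset.range (n + 1), ∑ j ∈ Finset.range (l + 1), x ^ j
      = (n + 1) • y - y * (x * (y * (1 - x ^ (n + 1)))) := by
    intro n
    have hG : ∑ l ∈ Finset.range (n + 1), x ^ l = y * (1 - x ^ (n + 1)) := by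
      have := geom (n + 1)
      calc ∑ l ∈ Finset.range (n + 1), x ^ l
          = y * ((1 - x) * ∑ l ∈ Finset.range (n + 1), x ^ l) := by
            rw [← mul_assoc, h2, one_mul]
        _ = y * (1 - x ^ (n + 1)) := by rw [this]
    have hS : (1 - x) * ∑ l ∈ Finset.range (n + 1), ∑ j ∈ Finset.range (l + 1), x ^ j
        = (n + 1) • (1 : A) - x * ∑ l ∈ Finset.range (n + 1), x ^ l := by
      rw [Finset.mul_sum]
      simp only [geom]
      rw [Finset.sum_sub_distrib, Finset.sum_const, Finset.card_range, Finset.mul_sum]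
      congr 1
      exact Finset.sum_congr rfl fun l _ => pow_succ' x l
    calc ∑ l ∈ Finset.range (n + 1), ∑ j ∈ Finset.range (l + 1), x ^ j
        = y * ((1 - x) * ∑ l ∈ Finset.range (n + 1), ∑ j ∈ Finset.range (l + 1), x ^ j) := by
          rw [← mul_assoc, h2, one_mul]
      _ = y * ((n + 1) • (1 : A) - x * (y * (1 - x ^ (n + 1)))) := by rw [hS, hG]
      _ = (n + 1) • y - y * (x * (y * (1 - x ^ (n + 1)))) := by
          rw [mul_sub, mul_smul_comm, mul_one]
  have hfun : ∀ n : ℕ, ((n : ℝ) + 1)⁻¹ •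
      ∑ l ∈ Finset.range (n + 1), ∑ j ∈ Finset.range (l + 1), x ^ j
      = y - ((n : ℝ) + 1)⁻¹ • (y * (x * (y * (1 - x ^ (n + 1))))) := by
    intro n
    rw [key n, smul_sub]
    congr 1
    rw [← Nat.cast_smul_eq_nsmul ℝ, smul_smul]
    push_cast
    rw [inv_mul_cancel₀ (by positivity : ((n : ℝ) + 1) ≠ 0), one_smul]
  simp only [hfun]
  have h0 : Filter.Tendsto
      (fun n : ℕ => ((n : ℝ) + 1)⁻¹ • (y * (x * (y * (1 - x ^ (n + 1))))))
      Filter.atTop (nhds 0) := by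
    apply squeeze_zero_norm (a := fun n : ℕ => ((n : ℝ) + 1)⁻¹ * (‖y‖ * ‖x‖ * ‖y‖ * 2))
    · intro n
      rw [norm_smul, norm_inv, Real.norm_eq_abs, abs_of_pos (by positivity : (0:ℝ) < (n:ℝ)+1)]
      gcongr
      calc ‖y * (x * (y * (1 - x ^ (n + 1))))‖
          ≤ ‖y‖ * (‖x‖ * (‖y‖ * ‖1 - x ^ (n + 1)‖)) := by
            refine (norm_mul_le _ _).trans ?_
            gcongr
            refine (norm_mul_le _ _).trans ?_
            gcongr
            exact norm_mul_le _ _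
        _ ≤ ‖y‖ * (‖x‖ * (‖y‖ * 2)) := by
            gcongr
            calc ‖1 - x ^ (n + 1)‖ ≤ ‖(1:A)‖ + ‖x ^ (n+1)‖ := norm_sub_le _ _
              _ ≤ 1 + 1 := by
                  rw [norm_one]
                  gcongr
                  calc ‖x ^ (n+1)‖ ≤ ‖x‖ ^ (n+1) := norm_pow_le' x n.succ_pos
                    _ = 1 := by rw [hx, one_pow]
              _ = 2 := by norm_num
        _ = ‖y‖ * ‖x‖ * ‖y‖ * 2 := by ring
    · have : Filter.Tendsto (fun n : ℕ => ((n : ℝ) + 1)⁻¹) Filter.atTop (nhds 0) :=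
        tendsto_one_div_add_atTop_nhds_zero_nat.congr (by intro n; rw [one_div])
      simpa using this.mul_const (‖y‖ * ‖x‖ * ‖y‖ * 2)
  have := Filter.Tendsto.const_sub y h0
  simpa using this
end

section
/- Let H be a Hilbert space and T : H → H a unitary operator. Then the orthogonal complement of the closure of W = {T(u) − u : u ∈ H} equals the fixed-point subspace {y ∈ H : T(y) = y}, and for every v ∈ H the averages (1/(n+1)) ∑_{j=0}^n T^j(v) converge to the orthogonal projection of v onto the fixed-point subspace (von Neumann mean ergodic theorem). -/
/-!
An operator preserving the inner product is a contraction, so von Neumann's mean ergodic theorem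
for contractions, `ContinuousLinearMap.tendsto_birkhoffAverage_orthogonalProjection`, applies.
For the orthogonality statement: a fixed point `x` is orthogonal to every `T u - u` because
`⟪T u, x⟫ = ⟪T u, T x⟫ = ⟪u, x⟫`; conversely, if `x ⊥ range (T - 1)` then `⟪T x, x⟫ = ‖x‖²`
while `‖T x‖ ≤ ‖x‖`, which forces `T x = x`.
-/

open Filter Topology

open scoped InnerProductSpace

namespace ContinuousLinearMap

variable {𝕜 E : Type*} [RCLike 𝕜] [NormedAddCommGroup E] [InnerProductSpace 𝕜 E]

theorem mem_ker_sub_one_iff {f : E →L[𝕜] E} {x : E} :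
    x ∈ LinearMap.ker ((f - 1 : E →L[𝕜] E) : E →ₗ[𝕜] E) ↔ f x = x := by
  simp [sub_eq_zero]

theorem ker_sub_one_eq_eqLocus (f : E →L[𝕜] E) :
    LinearMap.ker ((f - 1 : E →L[𝕜] E) : E →ₗ[𝕜] E) = f.eqLocus (1 : E →L[𝕜] E) :=
  Submodule.ext fun _ => mem_ker_sub_one_iff

theorem opNorm_le_one_of_inner_map_map (f : E →L[𝕜] E) (hf : ∀ x y, ⟪f x, f y⟫_𝕜 = ⟪x, y⟫_𝕜) :
    ‖f‖ ≤ 1 :=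
  (f.toLinearMap.isometryOfInner hf).norm_toContinuousLinearMap_le

theorem ker_sub_one_le_orthogonal_range_sub_one (f : E →L[𝕜] E)
    (hf : ∀ x y, ⟪f x, f y⟫_𝕜 = ⟪x, y⟫_𝕜) :
    LinearMap.ker ((f - 1 : E →L[𝕜] E) : E →ₗ[𝕜] E) ≤
      (LinearMap.range ((f - 1 : E →L[𝕜] E) : E →ₗ[𝕜] E))ᗮ := by
  rintro x hx _ ⟨u, rfl⟩
  rw [mem_ker_sub_one_iff] at hx
  simp [inner_sub_left, ← hf u x, hx]

theorem orthogonal_range_sub_one_le_ker_sub_one (f : E →L[𝕜] E) (hf : ‖f‖ ≤ 1) :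
    (LinearMap.range ((f - 1 : E →L[𝕜] E) : E →ₗ[𝕜] E))ᗮ ≤
      LinearMap.ker ((f - 1 : E →L[𝕜] E) : E →ₗ[𝕜] E) := by
  intro x hx
  have hfx : ∀ y, ⟪f y, x⟫_𝕜 = ⟪y, x⟫_𝕜 := by
    simpa [Submodule.mem_orthogonal, inner_sub_left, sub_eq_zero] using hx
  rw [mem_ker_sub_one_iff]
  refine eq_of_norm_le_re_inner_eq_norm_sq (𝕜 := 𝕜) ?_ ?_
  · simpa using f.le_of_opNorm_le hf x
  · simp [hfx]

theorem tendsto_average_range_succ_orthogonalProjection [CompleteSpace E] (f : E →L[𝕜] E)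
    (hf : ‖f‖ ≤ 1) (x : E) :
    Tendsto (fun n : ℕ => ((n : 𝕜) + 1)⁻¹ • ∑ j ∈ Finset.range (n + 1), (f ^ j) x) atTop
      (𝓝 ((f.eqLocus (1 : E →L[𝕜] E)).orthogonalProjectionOnto x)) := by
  have hshift := (f.tendsto_birkhoffAverage_orthogonalProjection hf x).comp
    (tendsto_add_atTop_nat 1)
  convert hshift using 2 with n
  simp [birkhoffAverage, birkhoffSum]

end ContinuousLinearMap

open ContinuousLinearMap in
theorem mean_ergodic_unitary_general {𝕜 : Type*} [RCLike 𝕜] {H : Type*}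
    [NormedAddCommGroup H] [InnerProductSpace 𝕜 H] [CompleteSpace H]
    (T : H →L[𝕜] H)
    (hinner : ∀ v w : H, (inner 𝕜 (T v) (T w) : 𝕜) = inner 𝕜 v w) :
    ((LinearMap.range ((T - 1 : H →L[𝕜] H) : H →ₗ[𝕜] H)).topologicalClosure)ᗮ = LinearMap.ker ((T - 1 : H →L[𝕜] H) : H →ₗ[𝕜] H) ∧
    (∀ v : H, ∃ w : H, w ∈ LinearMap.ker ((T - 1 : H →L[𝕜] H) : H →ₗ[𝕜] H) ∧
      v - w ∈ (LinearMap.ker ((T - 1 : H →L[𝕜] H) : H →ₗ[𝕜] H) : Submodule 𝕜 H)ᗮ ∧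
      Filter.Tendsto
        (fun n : ℕ => ((n : 𝕜) + 1)⁻¹ • ∑ j ∈ Finset.range (n + 1), (T ^ j) v)
        Filter.atTop (nhds w)) := by
  have hT : ‖T‖ ≤ 1 := T.opNorm_le_one_of_inner_map_map hinner
  refine ⟨?_, fun v => ?_⟩
  · rw [Submodule.orthogonal_closure]
    exact le_antisymm (T.orthogonal_range_sub_one_le_ker_sub_one hT)
      (T.ker_sub_one_le_orthogonal_range_sub_one hinner)
  · rw [T.ker_sub_one_eq_eqLocus]
    exact ⟨_, Submodule.coe_mem _, Submodule.sub_starProjection_mem_orthogonal v,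
      T.tendsto_average_range_succ_orthogonalProjection hT v⟩

theorem mean_ergodic_unitary {𝕜 : Type*} [RCLike 𝕜] {H : Type*}
    [NormedAddCommGroup H] [InnerProductSpace 𝕜 H] [CompleteSpace H]
    (T : H →L[𝕜] H) (hsurj : Function.Surjective T)
    (hinner : ∀ v w : H, (inner 𝕜 (T v) (T w) : 𝕜) = inner 𝕜 v w) :
    ((LinearMap.range ((T - 1 : H →L[𝕜] H) : H →ₗ[𝕜] H)).topologicalClosure)ᗮ = LinearMap.ker ((T - 1 : H →L[𝕜] H) : H →ₗ[𝕜] H) ∧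
    (∀ v : H, ∃ w : H, w ∈ LinearMap.ker ((T - 1 : H →L[𝕜] H) : H →ₗ[𝕜] H) ∧
      v - w ∈ (LinearMap.ker ((T - 1 : H →L[𝕜] H) : H →ₗ[𝕜] H) : Submodule 𝕜 H)ᗮ ∧
      Filter.Tendsto
        (fun n : ℕ => ((n : 𝕜) + 1)⁻¹ • ∑ j ∈ Finset.range (n + 1), (T ^ j) v)
        Filter.atTop (nhds w)) :=
  mean_ergodic_unitary_general T hinner
end
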